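/- Let c ∈ (0, 1/2]. Define f : Ω_c → ℝ by f(x,y,z) = z·log₂(z/(xy)) + (x−z)·log₂((x−z)/(x(1−y))) + (y−z)·log₂((y−z)/((1−x)y)) + (1−x−y+z)·log₂((1−x−y+z)/((1−x)(1−y))), where Ω_c ⊆ ℝ³ is the set of triples (x,y,z) satisfying c ≤ x ≤ 1−c, c ≤ y ≤ 1−c, c²·x ≤ z ≤ (1−c²)·x, c²·y ≤ z ≤ (1−c²)·y, c²·(1−x) ≤ 1+z−x−y ≤ (1−c²)·(1−x), and c²·(1−y) ≤ 1+z−x−y ≤ (1−c²)·(1−y). Then: (i) for any pair (X,Y) of {0,1}-valued random variables with (E[X], E[Y], E[XY]) ∈ Ω_c, one has I(X;Y) = f(E[X], E[Y], E[XY]); and (ii) f is 16·log₂(1/c)-Lipschitz with respect to the sup norm on Ω_c, i.e., |f(u) − f(v)| ≤ 16·log₂(1/c)·max(|u₁−v₁|, |u₂−v₂|, |u₃−v₃|) for all u, v ∈ Ω_c. -/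

import Mathlib

/-!
Part (i) is a rearrangement of the four terms of `miBB`, the cell probabilities being
`z`, `x - z`, `y - z` and `1 - x - y + z`.

For (ii), `f · log 2 = H(X) + H(Y) - H(X,Y)` is a sum of `negMulLog` terms. With
`pᵢ = P[Y = 1 | X = i]` and `qᵢ = 1 - pᵢ`, its partial derivatives in `x` and `z` are
`log (q₁ / q₀)` and the log odds ratio `log (p₁ q₀ / (p₀ q₁))`, and the one in `y` is the analogue
of the first with the roles of `X` and `Y` exchanged. On `Ω_c` every conditional probability
lies in `[c², 1]`, so each of the four differences of logarithms is at most `log (1 / c²)` in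
absolute value, and the gradient has norm at most `8 log (1 / c)` against the sup norm. Since `Ω_c`
is convex, the mean value inequality gives the Lipschitz constant `8 log₂ (1 / c)`.
-/

/-- The function `f` expressing mutual information (in bits) of a pair of binary random
variables in terms of `(E[X], E[Y], E[XY])`. -/
noncomputable def fMI (x y z : ℝ) : ℝ :=
  z * Real.logb 2 (z / (x * y))
    + (x - z) * Real.logb 2 ((x - z) / (x * (1 - y)))
    + (y - z) * Real.logb 2 ((y - z) / ((1 - x) * y))
    + (1 - x - y + z) * Real.logb 2 ((1 - x - y + z) / ((1 - x) * (1 - y)))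

/-- The domain `Ω_c ⊆ ℝ³`. -/
def OmegaC (c : ℝ) : Set (ℝ × ℝ × ℝ) :=
  {w | c ≤ w.1 ∧ w.1 ≤ 1 - c ∧ c ≤ w.2.1 ∧ w.2.1 ≤ 1 - c ∧
    c ^ 2 * w.1 ≤ w.2.2 ∧ w.2.2 ≤ (1 - c ^ 2) * w.1 ∧
    c ^ 2 * w.2.1 ≤ w.2.2 ∧ w.2.2 ≤ (1 - c ^ 2) * w.2.1 ∧
    c ^ 2 * (1 - w.1) ≤ 1 + w.2.2 - w.1 - w.2.1 ∧
    1 + w.2.2 - w.1 - w.2.1 ≤ (1 - c ^ 2) * (1 - w.1) ∧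
    c ^ 2 * (1 - w.2.1) ≤ 1 + w.2.2 - w.1 - w.2.1 ∧
    1 + w.2.2 - w.1 - w.2.1 ≤ (1 - c ^ 2) * (1 - w.2.1)}

/-- Mutual information (in bits) of a joint distribution `ν` of a pair of `{0,1}`-valued
random variables; terms where the joint probability is `0` contribute `0`
(automatic since `0 * log 0 = 0`). -/
noncomputable def miBB (ν : Bool × Bool → ℝ) : ℝ :=
  ∑ z : Bool × Bool,
    ν z * Real.logb 2 (ν z / ((∑ b : Bool, ν (z.1, b)) * (∑ a : Bool, ν (a, z.2))))

open Real ContinuousLinearMap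

theorem miBB_eq_fMI (ν : Bool × Bool → ℝ) (hsum : ∑ z, ν z = 1) :
    miBB ν = fMI (∑ b : Bool, ν (true, b)) (∑ a : Bool, ν (a, true)) (ν (true, true)) := by
  simp only [Fintype.sum_prod_type, Fintype.sum_bool] at hsum
  simp only [miBB, fMI, Fintype.sum_prod_type, Fintype.sum_bool]
  rw [show ν (true, true) + ν (true, false) - ν (true, true) = ν (true, false) by ring,
    show ν (true, true) + ν (false, true) - ν (true, true) = ν (false, true) by ring,
    show 1 - (ν (true, true) + ν (true, false)) - (ν (true, true) + ν (false, true))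
        + ν (true, true) = ν (false, false) by linarith,
    show 1 - (ν (true, true) + ν (false, true)) = ν (true, false) + ν (false, false) by linarith,
    show 1 - (ν (true, true) + ν (true, false)) = ν (false, true) + ν (false, false) by linarith]
  ring

noncomputable def binaryMutualInfo (w : ℝ × ℝ × ℝ) : ℝ :=
  negMulLog w.1 + negMulLog (1 - w.1) + negMulLog w.2.1 + negMulLog (1 - w.2.1)
    - (negMulLog w.2.2 + negMulLog (w.1 - w.2.2) + negMulLog (w.2.1 - w.2.2)
      + negMulLog (1 - w.1 - w.2.1 + w.2.2))

theorem fMI_eq_binaryMutualInfo_div_log_two {x y z : ℝ} (hz : 0 < z) (hxz : 0 < x - z)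
    (hyz : 0 < y - z) (hw : 0 < 1 - x - y + z) :
    fMI x y z = binaryMutualInfo (x, y, z) / log 2 := by
  have hx : x ≠ 0 := by linarith
  have hy : y ≠ 0 := by linarith
  have hx' : 1 - x ≠ 0 := by linarith
  have hy' : 1 - y ≠ 0 := by linarith
  simp only [fMI, binaryMutualInfo, negMulLog, logb]
  rw [log_div hz.ne' (mul_ne_zero hx hy), log_div hxz.ne' (mul_ne_zero hx hy'),
    log_div hyz.ne' (mul_ne_zero hx' hy), log_div hw.ne' (mul_ne_zero hx' hy'),
    log_mul hx hy, log_mul hx hy', log_mul hx' hy, log_mul hx' hy']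
  ring

noncomputable def tripleFunctional (a b d : ℝ) : ℝ × ℝ × ℝ →L[ℝ] ℝ :=
  a • fst ℝ ℝ (ℝ × ℝ) + b • (fst ℝ ℝ ℝ ∘L snd ℝ ℝ (ℝ × ℝ)) + d • (snd ℝ ℝ ℝ ∘L snd ℝ ℝ (ℝ × ℝ))

@[simp]
theorem tripleFunctional_apply (a b d : ℝ) (h : ℝ × ℝ × ℝ) :
    tripleFunctional a b d h = a * h.1 + b * h.2.1 + d * h.2.2 := rfl

theorem norm_tripleFunctional_le (a b d : ℝ) :
    ‖tripleFunctional a b d‖ ≤ |a| + |b| + |d| := by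
  refine opNorm_le_bound _ (by positivity : (0 : ℝ) ≤ |a| + |b| + |d|) fun h => ?_
  have h1 : |h.1| ≤ ‖h‖ := norm_fst_le h
  have h2 : |h.2.1| ≤ ‖h‖ := (norm_fst_le h.2).trans (norm_snd_le h)
  have h3 : |h.2.2| ≤ ‖h‖ := (norm_snd_le h.2).trans (norm_snd_le h)
  rw [tripleFunctional_apply, Real.norm_eq_abs]
  calc |a * h.1 + b * h.2.1 + d * h.2.2| ≤ |a| * |h.1| + |b| * |h.2.1| + |d| * |h.2.2| := by
        simpa only [abs_mul] using abs_add_three (a * h.1) (b * h.2.1) (d * h.2.2)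
    _ ≤ (|a| + |b| + |d|) * ‖h‖ := by
        nlinarith [abs_nonneg a, abs_nonneg b, abs_nonneg d]

noncomputable def binaryMutualInfoGrad (x y z : ℝ) : ℝ × ℝ × ℝ →L[ℝ] ℝ :=
  tripleFunctional
    (log (x - z) + log (1 - x) - log x - log (1 - x - y + z))
    (log (y - z) + log (1 - y) - log y - log (1 - x - y + z))
    (log z + log (1 - x - y + z) - log (x - z) - log (y - z))

theorem hasFDerivAt_binaryMutualInfo {x y z : ℝ} (hz : 0 < z) (hxz : 0 < x - z)
    (hyz : 0 < y - z) (hw : 0 < 1 - x - y + z) :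
    HasFDerivAt binaryMutualInfo (binaryMutualInfoGrad x y z) (x, y, z) := by
  have term : ∀ {g : ℝ × ℝ × ℝ → ℝ} {g' : ℝ × ℝ × ℝ →L[ℝ] ℝ}, HasFDerivAt g g' (x, y, z) →
      0 < g (x, y, z) →
      HasFDerivAt (fun w => negMulLog (g w)) ((-log (g (x, y, z)) - 1) • g') (x, y, z) :=
    fun hg hpos => (hasDerivAt_negMulLog hpos.ne').comp_hasFDerivAt _ hg
  have hX : HasFDerivAt (fun w : ℝ × ℝ × ℝ => w.1) _ (x, y, z) := hasFDerivAt_fst (𝕜 := ℝ)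
  have hY : HasFDerivAt (fun w : ℝ × ℝ × ℝ => w.2.1) _ (x, y, z) := (hasFDerivAt_snd (𝕜 := ℝ)).fst
  have hZ : HasFDerivAt (fun w : ℝ × ℝ × ℝ => w.2.2) _ (x, y, z) := (hasFDerivAt_snd (𝕜 := ℝ)).snd
  have h1 := hasFDerivAt_const (𝕜 := ℝ) (1 : ℝ) (x, y, z)
  have H := ((((term hX (by linarith : 0 < x)).add (term (h1.sub hX) (by linarith : 0 < 1 - x))).add
    (term hY (by linarith : 0 < y))).add (term (h1.sub hY) (by linarith : 0 < 1 - y))).sub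
    ((((term hZ hz).add (term (hX.sub hZ) hxz)).add (term (hY.sub hZ) hyz)).add
      (term (((h1.sub hX).sub hY).add hZ) hw))
  refine H.congr_fderiv ?_
  ext <;> simp [binaryMutualInfoGrad] <;> ring

theorem convex_OmegaC (c : ℝ) : Convex ℝ (OmegaC c) := by
  intro u hu v hv a b ha hb hab
  obtain rfl : b = 1 - a := by linarith
  have comb : ∀ {p q r s : ℝ}, p ≤ q → r ≤ s → a * p + (1 - a) * r ≤ a * q + (1 - a) * s :=
    fun h h' => add_le_add (mul_le_mul_of_nonneg_left h ha) (mul_le_mul_of_nonneg_left h' hb)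
  obtain ⟨u1, u2, u3, u4, u5, u6, u7, u8, u9, u10, u11, u12⟩ := hu
  obtain ⟨v1, v2, v3, v4, v5, v6, v7, v8, v9, v10, v11, v12⟩ := hv
  simp only [OmegaC, Set.mem_ofPred_eq, Prod.fst_add, Prod.snd_add, Prod.smul_fst, Prod.smul_snd,
    smul_eq_mul]
  exact ⟨by linarith [comb u1 v1], by linarith [comb u2 v2], by linarith [comb u3 v3],
    by linarith [comb u4 v4], by linarith [comb u5 v5], by linarith [comb u6 v6],
    by linarith [comb u7 v7], by linarith [comb u8 v8], by linarith [comb u9 v9],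
    by linarith [comb u10 v10], by linarith [comb u11 v11], by linarith [comb u12 v12]⟩

theorem cells_pos_of_mem_OmegaC {c x y z : ℝ} (hc : 0 < c) (hmem : (x, y, z) ∈ OmegaC c) :
    0 < z ∧ 0 < x - z ∧ 0 < y - z ∧ 0 < 1 - x - y + z := by
  obtain ⟨h1, h2, h3, -, h5, h6, -, h8, h9, -, -, -⟩ := hmem
  have hc2 : 0 < c ^ 2 := by positivity
  refine ⟨?_, ?_, ?_, ?_⟩ <;> nlinarith

theorem div_mem_Icc_of_mul_le {k n d : ℝ} (hd : 0 < d) (hk : k * d ≤ n) (hn : n ≤ d) :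
    n / d ∈ Set.Icc k 1 :=
  ⟨(le_div_iff₀ hd).2 hk, (div_le_one hd).2 hn⟩

theorem condProb_mem_Icc_of_mem_OmegaC {c x y z : ℝ} (hc : 0 < c) (hmem : (x, y, z) ∈ OmegaC c) :
    z / x ∈ Set.Icc (c ^ 2) 1 ∧ (x - z) / x ∈ Set.Icc (c ^ 2) 1 ∧
      (y - z) / (1 - x) ∈ Set.Icc (c ^ 2) 1 ∧ (1 - x - y + z) / (1 - x) ∈ Set.Icc (c ^ 2) 1 ∧
      (y - z) / y ∈ Set.Icc (c ^ 2) 1 ∧ (1 - x - y + z) / (1 - y) ∈ Set.Icc (c ^ 2) 1 := by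
  obtain ⟨hz, hxz, hyz, hw⟩ := cells_pos_of_mem_OmegaC hc hmem
  obtain ⟨-, -, -, -, h5, h6, h7, h8, h9, h10, h11, h12⟩ := hmem
  refine ⟨div_mem_Icc_of_mul_le ?_ ?_ ?_, div_mem_Icc_of_mul_le ?_ ?_ ?_,
    div_mem_Icc_of_mul_le ?_ ?_ ?_, div_mem_Icc_of_mul_le ?_ ?_ ?_,
    div_mem_Icc_of_mul_le ?_ ?_ ?_, div_mem_Icc_of_mul_le ?_ ?_ ?_⟩ <;> dsimp only at * <;> linarith

theorem abs_log_sub_log_le_log_inv {k a b : ℝ} (hk : 0 < k) (ha : a ∈ Set.Icc k 1)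
    (hb : b ∈ Set.Icc k 1) : |log a - log b| ≤ log k⁻¹ := by
  have hla := log_le_log hk ha.1
  have hlb := log_le_log hk hb.1
  have ha0 := log_nonpos (hk.trans_le ha.1).le ha.2
  have hb0 := log_nonpos (hk.trans_le hb.1).le hb.2
  rw [log_inv, abs_sub_le_iff]
  constructor <;> linarith

theorem norm_binaryMutualInfoGrad_le {c x y z : ℝ} (hc : 0 < c) (hmem : (x, y, z) ∈ OmegaC c) :
    ‖binaryMutualInfoGrad x y z‖ ≤ 8 * log c⁻¹ := by
  obtain ⟨hz, hxz, hyz, hw⟩ := cells_pos_of_mem_OmegaC hc hmem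
  have hx : 0 < x := by linarith
  have hy : 0 < y := by linarith
  have hx' : 0 < 1 - x := by linarith
  have hy' : 0 < 1 - y := by linarith
  obtain ⟨y1x1, y0x1, y1x0, y0x0, x0y1, x0y0⟩ := condProb_mem_Icc_of_mem_OmegaC hc hmem
  have bound := fun {a b : ℝ} (ha : a ∈ Set.Icc (c ^ 2) 1) (hb : b ∈ Set.Icc (c ^ 2) 1) =>
    (abs_log_sub_log_le_log_inv (pow_pos hc 2) ha hb).trans_eq
      (by rw [← inv_pow, log_pow, Nat.cast_ofNat] : log (c ^ 2)⁻¹ = 2 * log c⁻¹)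
  have ex : log (x - z) + log (1 - x) - log x - log (1 - x - y + z)
      = log ((x - z) / x) - log ((1 - x - y + z) / (1 - x)) := by
    rw [log_div hxz.ne' hx.ne', log_div hw.ne' hx'.ne']; ring
  have ey : log (y - z) + log (1 - y) - log y - log (1 - x - y + z)
      = log ((y - z) / y) - log ((1 - x - y + z) / (1 - y)) := by
    rw [log_div hyz.ne' hy.ne', log_div hw.ne' hy'.ne']; ring
  have ez : log z + log (1 - x - y + z) - log (x - z) - log (y - z)
      = (log (z / x) - log ((y - z) / (1 - x)))
        + (log ((1 - x - y + z) / (1 - x)) - log ((x - z) / x)) := by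
    rw [log_div hz.ne' hx.ne', log_div hyz.ne' hx'.ne', log_div hw.ne' hx'.ne',
      log_div hxz.ne' hx.ne']; ring
  refine (norm_tripleFunctional_le _ _ _).trans ?_
  rw [ex, ey, ez]
  linarith [bound y0x1 y0x0, bound x0y1 x0y0, bound y1x1 y1x0, bound y0x0 y0x1, abs_add_le
    (log (z / x) - log ((y - z) / (1 - x))) (log ((1 - x - y + z) / (1 - x)) - log ((x - z) / x))]

theorem abs_binaryMutualInfo_sub_le {c : ℝ} (hc : 0 < c) {u v : ℝ × ℝ × ℝ}
    (hu : u ∈ OmegaC c) (hv : v ∈ OmegaC c) :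
    |binaryMutualInfo u - binaryMutualInfo v| ≤ 8 * log c⁻¹ * ‖u - v‖ := by
  refine (convex_OmegaC c).norm_image_sub_le_of_norm_hasFDerivWithin_le
    (f' := fun w => binaryMutualInfoGrad w.1 w.2.1 w.2.2) (fun w hmem => ?_)
    (fun w hmem => norm_binaryMutualInfoGrad_le hc hmem) hv hu
  obtain ⟨hz, hxz, hyz, hw⟩ := cells_pos_of_mem_OmegaC hc hmem
  exact (hasFDerivAt_binaryMutualInfo hz hxz hyz hw).hasFDerivWithinAt

theorem abs_fMI_sub_le {c : ℝ} (hc : 0 < c) {u v : ℝ × ℝ × ℝ}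
    (hu : u ∈ OmegaC c) (hv : v ∈ OmegaC c) :
    |fMI u.1 u.2.1 u.2.2 - fMI v.1 v.2.1 v.2.2| ≤ 8 * logb 2 c⁻¹ * ‖u - v‖ := by
  obtain ⟨uz, uxz, uyz, uw⟩ := cells_pos_of_mem_OmegaC hc hu
  obtain ⟨vz, vxz, vyz, vw⟩ := cells_pos_of_mem_OmegaC hc hv
  have hl : 0 < log 2 := log_pos one_lt_two
  calc |fMI u.1 u.2.1 u.2.2 - fMI v.1 v.2.1 v.2.2|
      = |binaryMutualInfo u - binaryMutualInfo v| / log 2 := by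
        rw [fMI_eq_binaryMutualInfo_div_log_two uz uxz uyz uw,
          fMI_eq_binaryMutualInfo_div_log_two vz vxz vyz vw, ← sub_div, abs_div, abs_of_pos hl]
    _ ≤ 8 * log c⁻¹ * ‖u - v‖ / log 2 := by gcongr; exact abs_binaryMutualInfo_sub_le hc hu hv
    _ = 8 * logb 2 c⁻¹ * ‖u - v‖ := by rw [logb]; ring

theorem stmt15 (c : ℝ) (hc : c ∈ Set.Ioc (0:ℝ) (1/2)) :
    (∀ ν : Bool × Bool → ℝ, (∀ z, 0 ≤ ν z) → (∑ z, ν z = 1) →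
      ((∑ b : Bool, ν (true, b), ∑ a : Bool, ν (a, true), ν (true, true)) ∈ OmegaC c) →
      miBB ν = fMI (∑ b : Bool, ν (true, b)) (∑ a : Bool, ν (a, true)) (ν (true, true))) ∧
    (∀ u ∈ OmegaC c, ∀ v ∈ OmegaC c,
      |fMI u.1 u.2.1 u.2.2 - fMI v.1 v.2.1 v.2.2|
        ≤ 16 * Real.logb 2 (1 / c)
            * max |u.1 - v.1| (max |u.2.1 - v.2.1| |u.2.2 - v.2.2|)) := by
  obtain ⟨hc0, hc1⟩ := hc
  refine ⟨fun ν _ hsum _ => miBB_eq_fMI ν hsum, fun u hu v hv => ?_⟩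
  have hnorm : ‖u - v‖ = max |u.1 - v.1| (max |u.2.1 - v.2.1| |u.2.2 - v.2.2|) := rfl
  have hlog : 0 ≤ logb 2 (1 / c) :=
    logb_nonneg one_lt_two ((one_le_div hc0).2 (by linarith))
  rw [← hnorm]
  calc |fMI u.1 u.2.1 u.2.2 - fMI v.1 v.2.1 v.2.2| ≤ 8 * logb 2 (1 / c) * ‖u - v‖ := by
        simpa only [one_div] using abs_fMI_sub_le hc0 hu hv
    _ ≤ 16 * logb 2 (1 / c) * ‖u - v‖ := by gcongr; norm_num
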